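/- Almost surely, lim_{n→∞} (log Y_n)/(log n) = −α. -/

import Mathlib

open MeasureTheory ProbabilityTheory Filter

/-!
The rescaled gaps `(k + 1) E_k` are i.i.d. exponential with mean `α`, so by the strong law of
large numbers their averages tend to `α` almost surely. Abel summation turns this into
`∑_{k<n} E_k ~ α H_n` for the harmonic numbers `H_n`, and `H_{n-1} ~ log n`, so
`log Y_n = -∑_{k<n-1} E_k ~ -α log n`.
-/

open Real Set Topology

namespace ProbabilityTheory

variable {r : ℝ}

lemma expMeasure_eq_withDensity : expMeasure r = volume.withDensity (exponentialPDF r) := rfl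

lemma measurable_exponentialPDF : Measurable (exponentialPDF r) :=
  (measurable_exponentialPDFReal r).ennreal_ofReal

lemma exponentialPDFReal_mul_self_eq_indicator :
    (fun x => exponentialPDFReal r x * x)
      = (Ioi 0).indicator fun x => r * (x * exp (-(r * x))) := by
  ext x
  rcases le_or_gt x 0 with hx | hx
  · rcases hx.lt_or_eq with hx | rfl
    · simp [exponentialPDFReal, gammaPDFReal, hx.not_ge, hx.not_gt]
    · simp
  · simp only [exponentialPDFReal, gammaPDFReal, hx.le, ↓reduceIte, rpow_one, Gamma_one, div_one,
      sub_self, rpow_zero, mul_one, indicator_of_mem (mem_Ioi.mpr hx)]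
    ring

lemma map_const_mul_expMeasure {c : ℝ} (hc : 0 < c) (hr : 0 < r) :
    (expMeasure r).map (c * ·) = expMeasure (r / c) := by
  have := isProbabilityMeasure_expMeasure hr
  have := isProbabilityMeasure_expMeasure (div_pos hr hc)
  have hm : Measurable (c * · : ℝ → ℝ) := measurable_const_mul c
  have := Measure.isProbabilityMeasure_map (μ := expMeasure r) hm.aemeasurable
  have hpre (x : ℝ) : (c * ·) ⁻¹' Iic x = Iic (x / c) := by
    ext y
    simp only [mem_preimage, mem_Iic, le_div_iff₀ hc, mul_comm]
  rw [← Measure.cdf_eq_iff]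
  ext x
  rw [cdf_eq_real, measureReal_def, Measure.map_apply hm measurableSet_Iic, hpre,
    ← measureReal_def, ← cdf_eq_real, cdf_expMeasure_eq hr, cdf_expMeasure_eq (div_pos hr hc)]
  simp only [div_nonneg_iff, hc.le, hc.not_ge, and_true, and_false, or_false, mul_div_assoc']
  ring_nf

lemma integrable_id_expMeasure (hr : 0 < r) : Integrable id (expMeasure r) := by
  rw [expMeasure_eq_withDensity, integrable_withDensity_iff_integrable_smul'
    measurable_exponentialPDF (ae_of_all _ fun _ => ENNReal.ofReal_lt_top)]
  simp only [exponentialPDF, ENNReal.toReal_ofReal (exponentialPDFReal_nonneg hr _), id,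
    smul_eq_mul, exponentialPDFReal_mul_self_eq_indicator,
    integrable_indicator_iff measurableSet_Ioi]
  refine Integrable.const_mul ?_ r
  simpa [IntegrableOn] using
    integrableOn_rpow_mul_exp_neg_mul_rpow (s := 1) (p := 1) (by norm_num) one_pos hr

lemma integral_id_expMeasure (hr : 0 < r) : ∫ x, x ∂expMeasure r = r⁻¹ := by
  rw [expMeasure_eq_withDensity, integral_withDensity_eq_integral_toReal_smul
    measurable_exponentialPDF (ae_of_all _ fun _ => ENNReal.ofReal_lt_top)]
  simp only [exponentialPDF, ENNReal.toReal_ofReal (exponentialPDFReal_nonneg hr _), smul_eq_mul,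
    exponentialPDFReal_mul_self_eq_indicator, integral_indicator measurableSet_Ioi,
    integral_const_mul]
  have := integral_rpow_mul_exp_neg_mul_Ioi two_pos hr
  norm_num [Gamma_two] at this
  rw [this]
  field_simp

end ProbabilityTheory

lemma harmonic_eq_sum_range_inv (n : ℕ) :
    (harmonic n : ℝ) = ∑ k ∈ Finset.range n, ((k : ℝ) + 1)⁻¹ := by
  simp [harmonic]

lemma tendsto_harmonic_atTop : Tendsto (fun n => (harmonic n : ℝ)) atTop atTop := by
  simpa [harmonic_eq_sum_range_inv, one_div] using
    Real.tendsto_sum_range_one_div_nat_succ_atTop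

/-- Abel summation against the running averages `(∑ j ∈ range k, a j) / k`. -/
lemma sum_range_div_succ_eq (a : ℕ → ℝ) (n : ℕ) :
    ∑ k ∈ Finset.range n, a k / (k + 1) = (∑ k ∈ Finset.range n, a k) / n
      + ∑ k ∈ Finset.range n, (∑ j ∈ Finset.range k, a j) / k / (k + 1) := by
  induction n with
  | zero => simp
  | succ n ih =>
    simp only [Finset.sum_range_succ, ih]
    rcases Nat.eq_zero_or_pos n with rfl | hn
    · simp
    · have : (n : ℝ) ≠ 0 := by positivity
      push_cast
      field_simp
      ring

lemma Filter.Tendsto.sum_div_succ_div_harmonic {b : ℕ → ℝ} {L : ℝ}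
    (h : Tendsto b atTop (𝓝 L)) :
    Tendsto (fun n => (∑ k ∈ Finset.range n, b k / (k + 1)) / harmonic n) atTop (𝓝 L) := by
  have hsmall : (fun k => (b k - L) / (k + 1)) =o[atTop] fun k : ℕ => ((k : ℝ) + 1)⁻¹ := by
    simpa [div_eq_mul_inv] using ((Asymptotics.isLittleO_one_iff ℝ).2
      (tendsto_sub_nhds_zero_iff.2 h)).mul_isBigO (Asymptotics.isBigO_refl _ atTop)
  have hsum := (hsmall.sum_range (fun k => by positivity)
    (by simpa [harmonic_eq_sum_range_inv] using tendsto_harmonic_atTop)).tendsto_div_nhds_zero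
  have hlim := hsum.add_const L
  rw [zero_add] at hlim
  refine hlim.congr' ?_
  filter_upwards [tendsto_harmonic_atTop.eventually_gt_atTop 0] with n hn
  have hsplit : ∑ k ∈ Finset.range n, (b k - L) / (k + 1)
      = ∑ k ∈ Finset.range n, b k / (k + 1) - L * ∑ k ∈ Finset.range n, ((k : ℝ) + 1)⁻¹ := by
    rw [Finset.mul_sum, ← Finset.sum_sub_distrib]
    exact Finset.sum_congr rfl fun k _ => by ring
  rw [harmonic_eq_sum_range_inv] at hn ⊢
  rw [hsplit, sub_div, mul_div_assoc, div_self hn.ne', mul_one, sub_add_cancel]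

lemma tendsto_sum_div_succ_div_harmonic_of_tendsto_average {a : ℕ → ℝ} {L : ℝ}
    (h : Tendsto (fun n => (∑ k ∈ Finset.range n, a k) / n) atTop (𝓝 L)) :
    Tendsto (fun n => (∑ k ∈ Finset.range n, a k / (k + 1)) / harmonic n) atTop (𝓝 L) := by
  have hinv : Tendsto (fun n => (harmonic n : ℝ)⁻¹) atTop (𝓝 0) :=
    tendsto_harmonic_atTop.inv_tendsto_atTop
  have hlim := (h.mul hinv).add h.sum_div_succ_div_harmonic
  rw [mul_zero, zero_add] at hlim
  refine hlim.congr fun n => ?_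
  rw [sum_range_div_succ_eq a n]
  ring

lemma tendsto_harmonic_pred_div_log :
    Tendsto (fun n : ℕ => (harmonic (n - 1) : ℝ) / log n) atTop (𝓝 1) := by
  have hlog : Tendsto (fun n : ℕ => log n) atTop atTop :=
    tendsto_log_atTop.comp tendsto_natCast_atTop_atTop
  have hupper : Tendsto (fun n : ℕ => 1 + (log n)⁻¹) atTop (𝓝 1) := by
    simpa using hlog.inv_tendsto_atTop.const_add 1
  refine tendsto_of_tendsto_of_tendsto_of_le_of_le' tendsto_const_nhds hupper ?_ ?_
  all_goals filter_upwards [hlog.eventually_gt_atTop 0, eventually_ge_atTop 2] with n hn h2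
  · rw [le_div_iff₀ hn, one_mul]
    simpa [Nat.sub_add_cancel (one_le_two.trans h2)] using log_add_one_le_harmonic (n - 1)
  · rw [div_le_iff₀ hn, add_mul, one_mul, inv_mul_cancel₀ hn.ne', add_comm]
    refine (harmonic_le_one_add_log _).trans ?_
    gcongr
    · exact Nat.cast_pos.2 (Nat.sub_pos_of_lt h2)
    · exact Nat.sub_le n 1

lemma ae_tendsto_sum_succ_mul_div_of_map_eq_expMeasure
    {Ω : Type*} [MeasureSpace Ω] [IsProbabilityMeasure (ℙ : Measure Ω)]
    {α : ℝ} (hα : 0 < α) {E : ℕ → Ω → ℝ} (hindep : iIndepFun E ℙ)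
    (hdist : ∀ k : ℕ, Measure.map (E k) ℙ = expMeasure ((k + 1) / α)) :
    ∀ᵐ ω ∂(ℙ : Measure Ω),
      Tendsto (fun n : ℕ => (∑ k ∈ Finset.range n, ((k : ℝ) + 1) * E k ω) / n) atTop (𝓝 α) := by
  set F : ℕ → Ω → ℝ := fun k ω => ((k : ℝ) + 1) * E k ω
  have hE : ∀ k, AEMeasurable (E k) := fun k => AEMeasurable.of_map_ne_zero <| by
    rw [hdist k]
    exact (isProbabilityMeasure_expMeasure (by positivity)).ne_zero
  have hF : ∀ k, AEMeasurable (F k) := fun k => (hE k).const_mul _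
  have hmap : ∀ k, Measure.map (F k) ℙ = expMeasure α⁻¹ := fun k => by
    change Measure.map ((((k : ℝ) + 1) * ·) ∘ E k) ℙ = _
    rw [← AEMeasurable.map_map_of_aemeasurable (measurable_const_mul _).aemeasurable (hE k),
      hdist k, map_const_mul_expMeasure (by positivity) (by positivity)]
    field_simp
  have hint : Integrable (F 0) ℙ :=
    (integrable_map_measure aestronglyMeasurable_id (hF 0)).1 <| by
      rw [hmap 0]
      exact integrable_id_expMeasure (inv_pos.2 hα)
  have hmean : (ℙ : Measure Ω)[F 0] = α := by
    rw [← integral_map (hF 0) aestronglyMeasurable_id (f := fun x => x), hmap 0,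
      integral_id_expMeasure (inv_pos.2 hα), inv_inv]
  have hident : ∀ k, IdentDistrib (F k) (F 0) ℙ ℙ := fun k =>
    ⟨hF k, hF 0, by rw [hmap k, hmap 0]⟩
  have hpair : Pairwise (Function.onFun (IndepFun · · ℙ) F) := fun i j hij =>
    (hindep.indepFun hij).comp (measurable_const_mul _) (measurable_const_mul _)
  simpa [hmean] using strong_law_ae_real F hint hpair hident

/-- `E k` is the variable of index `k + 1`, so `Y n = exp (-(E_1 + ⋯ + E_{n-1}))`. -/
theorem atlas_pareto_log_log_slope_general
    {Ω : Type*} [MeasureSpace Ω] [IsProbabilityMeasure (ℙ : Measure Ω)]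
    (α : ℝ) (hα : 0 < α) (E : ℕ → Ω → ℝ)
    (hindep : iIndepFun E ℙ)
    (hdist : ∀ k : ℕ, Measure.map (E k) ℙ = expMeasure ((k + 1) / α))
    (Y : ℕ → Ω → ℝ)
    (hY : ∀ n : ℕ, ∀ ω, Y n ω = Real.exp (-(∑ k ∈ Finset.range (n - 1), E k ω))) :
    ∀ᵐ ω ∂(ℙ : Measure Ω),
      Tendsto (fun n : ℕ => Real.log (Y n ω) / Real.log n) atTop (nhds (-α)) := by
  filter_upwards [ae_tendsto_sum_succ_mul_div_of_map_eq_expMeasure hα hindep hdist] with ω hω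
  have hsum : Tendsto (fun n => (∑ k ∈ Finset.range n, E k ω) / harmonic n) atTop (𝓝 α) := by
    refine (tendsto_sum_div_succ_div_harmonic_of_tendsto_average hω).congr fun n => ?_
    congr 1
    exact Finset.sum_congr rfl fun k _ => mul_div_cancel_left₀ _ k.cast_add_one_ne_zero
  have hlim := ((hsum.comp (tendsto_sub_atTop_nat 1)).mul tendsto_harmonic_pred_div_log).neg
  rw [mul_one] at hlim
  refine hlim.congr' ?_
  filter_upwards [eventually_ge_atTop 2] with n hn
  have hH : (harmonic (n - 1) : ℝ) ≠ 0 := by exact_mod_cast (harmonic_pos (by omega)).ne'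
  simp only [Function.comp_apply, hY, log_exp, div_mul_div_cancel₀ hH, neg_div]

/-- Almost surely, `log Y_n / log n → −α`, where `Y_n = exp(−(E_1 + ⋯ + E_{n−1}))` and
the `E_k` are independent, exponentially distributed with rate `k/α`.
Here `E k` stands for the variable of index `k + 1`. -/
theorem atlas_pareto_log_log_slope
    {Ω : Type*} [MeasureSpace Ω] [IsProbabilityMeasure (ℙ : Measure Ω)]
    (α : ℝ) (hα : 0 < α) (E : ℕ → Ω → ℝ)
    (hmeas : ∀ k, Measurable (E k))
    (hindep : iIndepFun E ℙ)
    (hdist : ∀ k : ℕ, Measure.map (E k) ℙ = expMeasure ((k + 1) / α))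
    (Y : ℕ → Ω → ℝ)
    (hY : ∀ n : ℕ, ∀ ω, Y n ω = Real.exp (-(∑ k ∈ Finset.range (n - 1), E k ω))) :
    ∀ᵐ ω ∂(ℙ : Measure Ω),
      Tendsto (fun n : ℕ => Real.log (Y n ω) / Real.log n) atTop (nhds (-α)) :=
  atlas_pareto_log_log_slope_general α hα E hindep hdist Y hY
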